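/- arXiv:math/0302187 — 2 statements merged into one kernel-verified Lean document; each statement's English description precedes it below -/
import Mathlib

section
/- Let m be a finite-dimensional real vector space with complex structure I (I² = −Id) and let R, S : m → m be linear maps with R invertible. Define the real 2n×2n block operator J := [[−R⁻¹S, −R⁻¹],[R + S R⁻¹ S, S R⁻¹]] acting on m ⊕ m, and J⁻ := [[I, 0],[0, −I]]. Then J ∘ J = −Id, and J anticommutes with J⁻ if and only if RI = IR and SI = −IS. -/
section

variable {𝕜 M : Type*} [Ring 𝕜] [AddCommGroup M] [Module 𝕜 M]

def blockJ (R S R' : M →ₗ[𝕜] M) (p : M × M) : M × M :=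
  (-R' (S p.1) - R' p.2, R p.1 + S (R' (S p.1)) + S (R' p.2))

def blockJminus (I : M →ₗ[𝕜] M) (p : M × M) : M × M :=
  (I p.1, -I p.2)

theorem comm_inverse_of_comm {I R R' : M →ₗ[𝕜] M}
    (hRR' : ∀ x, R (R' x) = x) (hR'R : ∀ x, R' (R x) = x)
    (hRI : ∀ x, R (I x) = I (R x)) (x : M) : R' (I x) = I (R' x) := by
  conv_lhs => rw [← hRR' x, ← hRI, hR'R]

theorem blockJ_blockJ {R S R' : M →ₗ[𝕜] M}
    (hRR' : ∀ x, R (R' x) = x) (hR'R : ∀ x, R' (R x) = x) (p : M × M) :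
    blockJ R S R' (blockJ R S R' p) = -p := by
  obtain ⟨u, v⟩ := p
  simp only [blockJ, map_add, map_neg, map_sub, hRR', hR'R, Prod.neg_mk, Prod.mk.injEq]
  constructor <;> abel

theorem blockJ_blockJminus_anticomm_iff {I R S R' : M →ₗ[𝕜] M}
    (hRR' : ∀ x, R (R' x) = x) (hR'R : ∀ x, R' (R x) = x) :
    (∀ p, blockJ R S R' (blockJminus I p) = -blockJminus I (blockJ R S R' p)) ↔
      (∀ x, R (I x) = I (R x)) ∧ (∀ x, S (I x) = -I (S x)) := by
  constructor
  · intro h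
    -- Inputs `(0, v)` isolate the conditions `R⁻¹ I = I R⁻¹` and `S R⁻¹ I = -I S R⁻¹`.
    have h_zero_fst : ∀ v, R' (I v) = I (R' v) ∧ -S (R' (I v)) = I (S (R' v)) := by
      intro v
      simpa [blockJ, blockJminus] using h (0, v)
    have hRI : ∀ x, R (I x) = I (R x) :=
      comm_inverse_of_comm hR'R hRR' fun v => (h_zero_fst v).1
    refine ⟨hRI, fun x => ?_⟩
    have hS := (h_zero_fst (R x)).2
    rw [← hRI, hR'R, hR'R] at hS
    rw [← hS, neg_neg]
  · rintro ⟨hRI, hSI⟩ ⟨u, v⟩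
    simp only [blockJ, blockJminus, map_neg, map_add, map_sub, hSI, hRI,
      comm_inverse_of_comm hRR' hR'R hRI, neg_neg, Prod.neg_mk, Prod.mk.injEq]
    exact ⟨by abel, trivial⟩

end

theorem stmt7_general {m : Type*} [AddCommGroup m] [Module ℝ m]
    (I R S R' : m →ₗ[ℝ] m)
    (hRR' : ∀ x, R (R' x) = x) (hR'R : ∀ x, R' (R x) = x)
    (J Jm : m × m →ₗ[ℝ] m × m)
    (hJ : ∀ u v : m, J (u, v) = (-R' (S u) - R' v, R u + S (R' (S u)) + S (R' v)))
    (hJm : ∀ u v : m, Jm (u, v) = (I u, -I v)) :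
    (∀ p, J (J p) = -p) ∧
    ((∀ p, J (Jm p) = -(Jm (J p))) ↔
      ((∀ x, R (I x) = I (R x)) ∧ (∀ x, S (I x) = -I (S x)))) := by
  have hJ' : ⇑J = blockJ R S R' := funext fun p => hJ p.1 p.2
  have hJm' : ⇑Jm = blockJminus I := funext fun p => hJm p.1 p.2
  simp only [hJ', hJm']
  exact ⟨blockJ_blockJ hRR' hR'R, blockJ_blockJminus_anticomm_iff hRR' hR'R⟩

theorem stmt7 {m : Type*} [AddCommGroup m] [Module ℝ m] [FiniteDimensional ℝ m]
    (I R S R' : m →ₗ[ℝ] m)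
    (hI2 : ∀ x, I (I x) = -x)
    (hRR' : ∀ x, R (R' x) = x) (hR'R : ∀ x, R' (R x) = x)
    (J Jm : m × m →ₗ[ℝ] m × m)
    (hJ : ∀ u v : m, J (u, v) = (-R' (S u) - R' v, R u + S (R' (S u)) + S (R' v)))
    (hJm : ∀ u v : m, Jm (u, v) = (I u, -I v)) :
    (∀ p, J (J p) = -p) ∧
    ((∀ p, J (Jm p) = -(Jm (J p))) ↔
      ((∀ x, R (I x) = I (R x)) ∧ (∀ x, S (I x) = -I (S x)))) :=
  stmt7_general I R S R' hRR' hR'R J Jm hJ hJm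
end

section
/- Under the Hermitian symmetric pair assumptions (g = k ⊕ m, I : m → m with I² = −Id, [Iξ,Iη]=[ξ,η], I[ζ,η]=[ζ,Iη]), for every w ∈ m the endomorphism I ∘ ad([w, Iw]) of m equals ad(w)² + ad(Iw)² restricted to m, i.e. I[[w,Iw],η] = [w,[w,η]] + [Iw,[Iw,η]] for all η ∈ m. -/
theorem stmt12 {g : Type*} [LieRing g] [LieAlgebra ℝ g]
    (k m : Submodule ℝ g)
    (hdsup : k ⊔ m = ⊤) (hdinf : k ⊓ m = ⊥)
    (hkm : ∀ ζ ∈ k, ∀ η ∈ m, ⁅ζ, η⁆ ∈ m)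
    (hmm : ∀ ξ ∈ m, ∀ η ∈ m, ⁅ξ, η⁆ ∈ k)
    (I : g →ₗ[ℝ] g) (hIm : ∀ x ∈ m, I x ∈ m)
    (hI2 : ∀ x ∈ m, I (I x) = -x)
    (hbr : ∀ ξ ∈ m, ∀ η ∈ m, ⁅I ξ, I η⁆ = ⁅ξ, η⁆)
    (hk : ∀ ζ ∈ k, ∀ η ∈ m, I ⁅ζ, η⁆ = ⁅ζ, I η⁆) :
    ∀ w ∈ m, ∀ η ∈ m,
      I ⁅⁅w, I w⁆, η⁆ = ⁅w, ⁅w, η⁆⁆ + ⁅I w, ⁅I w, η⁆⁆ := by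
  intro w hw η hη
  have hIw := hIm w hw
  have hIη := hIm η hη
  have hwIη : ⁅w, I η⁆ = -⁅I w, η⁆ := by
    have := hbr (I w) hIw η hη
    rw [hI2 w hw, neg_lie] at this
    rw [← this, neg_neg]
  rw [hk ⁅w, I w⁆ (hmm w hw (I w) hIw) η hη, lie_lie, hbr w hw η hη, hwIη, lie_neg, sub_neg_eq_add]
end
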